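/- Let $T^{\circ}$ be a finite rooted tree with a distinguished node $\nu_\star$, and let $\mathcal{N}_\lambda(T^{\circ})$ denote the set of labelings $\ell : T^{\circ} \to \mathbb{N}$ which are monotone with respect to the tree partial order (i.e. $\ell_\nu \ge \ell_\varpi$ whenever $\nu \ge \varpi$, where $\nu \ge \varpi$ means $\varpi$ is an ancestor of $\nu$) and satisfy $2^{-\ell_{\nu_\star}} \le \lambda$. For $\eta : T^{\circ} \to \mathbb{R}$ set $\mathcal{I}_\lambda(\eta) = \sum_{\ell \in \mathcal{N}_\lambda(T^{\circ})} \prod_{\nu \in T^{\circ}} 2^{-\ell_\nu \eta_\nu}$ and $|\eta| = \sum_{\nu} \eta_\nu$. Assume: (1) for every $\nu \in T^{\circ}$, $\sum_{\upsilon \ge \nu} \eta_\upsilon > 0$; (2) for every $\nu \in T^{\circ}$ with $\nu \le \nu_\star$ such that the set $\{\upsilon : \upsilon \not\ge \nu\}$ is nonempty, one has $\sum_{\upsilon \not\ge \nu} \eta_\upsilon < 0$. Then there is a constant $C$ (depending on the tree and $\eta$ but not on $\lambda$) such that $\mathcal{I}_\lambda(\eta) \le C \lambda^{|\eta|}$ for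 all $\lambda \in (0,1]$. -/

import Mathlib

/-!
A monotone labelling `ℓ` of the tree is determined by its value `ℓ ν⋆` and by its increments
`δ ϖ = ℓ ϖ - ℓ (parent ϖ) ≥ 0` at the non-root nodes. Exchanging the order of summation,
`∑ ν, ℓ ν * η ν = ℓ ν⋆ * |η| + ∑_{ϖ ≠ root} δ ϖ * decayRate ϖ` with
`decayRate ϖ = ∑_{υ ≥ ϖ} η υ - [ϖ ≤ ν⋆] |η|`, and the two sign conditions say precisely that
`|η| > 0` and `decayRate ϖ > 0` for every non-root `ϖ`. Hence `𝓘_λ(η)` is dominated by a product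
of geometric series: the one in `ℓ ν⋆`, restricted to `2^{-ℓ ν⋆} ≤ λ`, is `O(λ^{|η|})`, and the
others are finite.
-/

open scoped Classical ENNReal
open Finset

namespace ENNReal

theorem tsum_pi_eq_prod_tsum {ι κ : Type*} [Fintype ι] (f : ι → κ → ℝ≥0∞) :
    ∑' m : ι → κ, ∏ i, f i (m i) = ∏ i, ∑' k, f i k := by
  revert f
  refine Fintype.induction_empty_option (P := fun ι _ => ∀ f : ι → κ → ℝ≥0∞,
    ∑' m : ι → κ, ∏ i, f i (m i) = ∏ i, ∑' k, f i k) ?_ ?_ ?_ ι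
  · intro α β _ e ih f
    let _ : Fintype α := Fintype.ofEquiv β e.symm
    rw [← (e.arrowCongr (Equiv.refl κ)).tsum_eq]
    convert ih (fun a => f (e a)) using 1
    · refine tsum_congr fun m => ?_
      rw [← e.prod_comp]
      simp
    · exact (e.prod_comp fun b => ∑' k, f b k).symm
  · intro f
    simp
  · intro α _ ih f
    rw [← (Equiv.piOptionEquivProd (β := fun _ => κ)).symm.tsum_eq, ENNReal.tsum_prod']
    simp_rw [Fintype.prod_option]
    simp [ENNReal.tsum_mul_left, ENNReal.tsum_mul_right, ih]

theorem tsum_mul_prod_pow {ι : Type*} [Fintype ι] (a : ℕ → ℝ≥0∞) (r : ι → ℝ≥0∞) :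
    ∑' p : ℕ × (ι → ℕ), a p.1 * ∏ i, r i ^ p.2 i = (∑' n, a n) * ∏ i, (1 - r i)⁻¹ := by
  simp only [ENNReal.tsum_prod', ENNReal.tsum_mul_left, ENNReal.tsum_mul_right,
    ENNReal.tsum_pi_eq_prod_tsum fun i k => r i ^ k, ENNReal.tsum_geometric]

end ENNReal

theorem Real.two_rpow_neg_natCast_mul (n : ℕ) (x : ℝ) :
    (2 : ℝ) ^ (-(n : ℝ) * x) = ((2 : ℝ) ^ (-x)) ^ n := by
  rw [← Real.rpow_mul_natCast zero_le_two]
  ring_nf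

theorem inv_one_sub_ofReal_two_rpow_neg_ne_top {x : ℝ} (hx : 0 < x) :
    (1 - ENNReal.ofReal (2 ^ (-x)))⁻¹ ≠ ⊤ := by
  rw [ENNReal.inv_ne_top, ne_eq, tsub_eq_zero_iff_le, not_le, ENNReal.ofReal_lt_one]
  exact Real.rpow_lt_one_of_one_lt_of_neg one_lt_two (neg_lt_zero.mpr hx)

/-- Only the levels `n` with `2⁻ⁿ ≤ λ` contribute, and they form a tail `n ≥ L` of `ℕ` whose first
term is `2^{-LA} ≤ λ^A`. -/
theorem tsum_geometric_two_rpow_le {lam A : ℝ} (hlam : 0 < lam) (hA : 0 ≤ A) :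
    ∑' n : ℕ, (if (2 : ℝ) ^ (-(n : ℝ)) ≤ lam then ENNReal.ofReal (2 ^ (-A)) ^ n else 0)
      ≤ ENNReal.ofReal (lam ^ A) * (1 - ENNReal.ofReal (2 ^ (-A)))⁻¹ := by
  set q := ENNReal.ofReal (2 ^ (-A))
  have hex : ∃ n : ℕ, (2 : ℝ) ^ (-(n : ℝ)) ≤ lam := by
    obtain ⟨n, hn⟩ := exists_pow_lt_of_lt_one hlam one_half_lt_one
    refine ⟨n, ?_⟩
    rw [Real.rpow_neg zero_le_two, Real.rpow_natCast, ← inv_pow, ← one_div]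
    exact hn.le
  set L := Nat.find hex
  have hmem : ∀ n : ℕ, (2 : ℝ) ^ (-(n : ℝ)) ≤ lam ↔ L ≤ n := fun n =>
    ⟨Nat.find_min' hex, fun hn => (Real.rpow_le_rpow_of_exponent_le one_le_two
      (neg_le_neg (Nat.cast_le.mpr hn))).trans (Nat.find_spec hex)⟩
  have hqL : q ^ L ≤ ENNReal.ofReal (lam ^ A) := by
    rw [← ENNReal.ofReal_pow (by positivity), ← Real.two_rpow_neg_natCast_mul,
      Real.rpow_mul zero_le_two]
    exact ENNReal.ofReal_le_ofReal
      (Real.rpow_le_rpow (by positivity) (Nat.find_spec hex) hA)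
  simp_rw [hmem]
  rw [← ENNReal.summable.sum_add_tsum_nat_add' (k := L)]
  have hhead : ∑ n ∈ range L, (if L ≤ n then q ^ n else 0) = 0 :=
    sum_eq_zero fun n hn => if_neg (not_le.mpr (mem_range.mp hn))
  simp only [hhead, le_add_iff_nonneg_left, zero_le, if_true, zero_add, pow_add,
    ENNReal.tsum_mul_right, ENNReal.tsum_geometric]
  rw [mul_comm]
  gcongr

theorem summable_and_tsum_le_of_tsum_ofReal_le {α : Type*} {f : α → ℝ} (hf : ∀ a, 0 ≤ f a)
    {b : ℝ} (hb : 0 ≤ b) (h : ∑' a, ENNReal.ofReal (f a) ≤ ENNReal.ofReal b) :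
    Summable f ∧ ∑' a, f a ≤ b := by
  have hsum : Summable f := by
    simpa only [ENNReal.toReal_ofReal (hf _)] using
      ENNReal.summable_toReal (ne_top_of_le_ne_top ENNReal.ofReal_ne_top h)
  refine ⟨hsum, ?_⟩
  rwa [← ENNReal.ofReal_tsum_of_nonneg hf hsum, ENNReal.ofReal_le_ofReal_iff hb] at h

section RootedTree

variable {V : Type*} [PartialOrder V]

theorem exists_isGreatest_Iio_of_isChain [Finite V] {ν : V}
    (hchain : IsChain (· ≤ ·) (Set.Iio ν)) (hν : ¬IsMin ν) : ∃ p, IsGreatest (Set.Iio ν) p := by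
  obtain ⟨p, hp⟩ := (Set.toFinite (Set.Iio ν)).exists_maximal (not_isMin_iff.mp hν)
  refine ⟨p, hp.prop, fun x hx => ?_⟩
  obtain rfl | hne := eq_or_ne x p
  · exact le_rfl
  · exact (hchain hx hp.prop hne).elim id (hp.le_of_ge hx)

/-- The parent map of a rooted tree, as a `PredOrder`. -/
noncomputable abbrev PredOrder.ofIsChainIio [Finite V]
    (h : ∀ ν : V, IsChain (· ≤ ·) (Set.Iio ν)) : PredOrder V where
  pred ν := if hν : IsMin ν then ν else (exists_isGreatest_Iio_of_isChain (h ν) hν).choose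
  pred_le ν := by
    split_ifs with hν
    · exact le_rfl
    · exact (exists_isGreatest_Iio_of_isChain (h ν) hν).choose_spec.1.le
  min_of_le_pred {ν} hle := by
    by_contra hν
    rw [dif_neg hν] at hle
    exact (exists_isGreatest_Iio_of_isChain (h ν) hν).choose_spec.1.not_ge hle
  le_pred_of_lt {a ν} hlt := by
    have hν : ¬IsMin ν := not_isMin_of_lt hlt
    rw [dif_neg hν]
    exact (exists_isGreatest_Iio_of_isChain (h ν) hν).choose_spec.2 hlt

end RootedTree

theorem sum_sum_filter_le_mul {V R : Type*} [Preorder V] [Fintype V]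
    [NonUnitalNonAssocSemiring R] (d η : V → R) :
    ∑ ν, (∑ ϖ ∈ univ.filter (· ≤ ν), d ϖ) * η ν = ∑ ϖ, d ϖ * ∑ υ ∈ univ.filter (ϖ ≤ ·), η υ := by
  simp only [sum_mul, mul_sum]
  exact sum_comm' fun ν ϖ => by simp

section DecayRate

variable {V : Type*} [PartialOrder V] [Fintype V]

noncomputable def decayRate (νstar : V) (η : V → ℝ) (ϖ : V) : ℝ :=
  ∑ υ ∈ univ.filter (ϖ ≤ ·), η υ - if ϖ ≤ νstar then ∑ υ, η υ else 0

theorem decayRate_pos [OrderBot V] {νstar : V} {η : V → ℝ}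
    (h1 : ∀ ν : V, 0 < ∑ υ ∈ univ.filter (ν ≤ ·), η υ)
    (h2 : ∀ ν : V, ν ≤ νstar → (univ.filter (¬ ν ≤ ·)).Nonempty →
      ∑ υ ∈ univ.filter (¬ ν ≤ ·), η υ < 0)
    {ϖ : V} (hϖ : ϖ ≠ ⊥) : 0 < decayRate νstar η ϖ := by
  unfold decayRate
  split_ifs with hle
  · have hbot : ⊥ ∈ univ.filter (¬ ϖ ≤ ·) := by simpa [le_bot_iff] using hϖ
    have := h2 ϖ hle ⟨⊥, hbot⟩
    rw [← sum_filter_add_sum_filter_not univ (ϖ ≤ ·)]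
    linarith
  · simpa using h1 ϖ

end DecayRate

section Increment

variable {V : Type*} [PartialOrder V] [PredOrder V]

def increment (ℓ : V → ℕ) (ν : V) : ℕ := ℓ ν - ℓ (Order.pred ν)

theorem filter_le_eq_insert_filter_le_pred [Fintype V] {ν : V} (hν : ¬IsMin ν) :
    univ.filter (· ≤ ν) = insert ν (univ.filter (· ≤ Order.pred ν)) := by
  ext x
  simp only [mem_filter, mem_univ, true_and, mem_insert, Order.le_pred_iff_of_not_isMin hν]
  exact le_iff_eq_or_lt

variable [OrderBot V]

@[simp]
theorem increment_bot (ℓ : V → ℕ) : increment ℓ ⊥ = 0 := by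
  simp [increment]

variable [Fintype V]

theorem add_sum_increment {ℓ : V → ℕ} (hℓ : Monotone ℓ) (ν : V) :
    ℓ ⊥ + ∑ ϖ ∈ univ.filter (· ≤ ν), increment ℓ ϖ = ℓ ν := by
  induction ν using WellFoundedLT.induction with
  | _ ν ih =>
    by_cases hν : IsMin ν
    · obtain rfl := isMin_iff_eq_bot.mp hν
      simp [le_bot_iff]
    · have hpred := Order.pred_lt_of_not_isMin hν
      rw [filter_le_eq_insert_filter_le_pred hν, sum_insert (by simp [hpred.not_ge]),
        add_left_comm, ih _ hpred, increment, Nat.sub_add_cancel (hℓ hpred.le)]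

theorem eq_of_increment_eq {ℓ ℓ' : V → ℕ} (hℓ : Monotone ℓ) (hℓ' : Monotone ℓ')
    (h : increment ℓ = increment ℓ') {ν : V} (hν : ℓ ν = ℓ' ν) : ℓ = ℓ' := by
  have hbot : ℓ ⊥ = ℓ' ⊥ := by
    have := (add_sum_increment hℓ ν).trans (hν.trans (add_sum_increment hℓ' ν).symm)
    rwa [h, add_left_inj] at this
  funext υ
  rw [← add_sum_increment hℓ υ, ← add_sum_increment hℓ' υ, h, hbot]

theorem injOn_apply_increment (νstar : V) :
    Set.InjOn (fun ℓ : V → ℕ => (ℓ νstar, fun w : {ϖ : V // ϖ ≠ ⊥} => increment ℓ w))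
      {ℓ | Monotone ℓ} := by
  intro ℓ hℓ ℓ' hℓ' h
  simp only [Prod.mk.injEq, funext_iff, Subtype.forall] at h
  refine eq_of_increment_eq hℓ hℓ' (funext fun ϖ => ?_) h.1
  obtain rfl | hϖ := eq_or_ne ϖ ⊥
  · simp
  · exact h.2 ϖ hϖ

theorem sum_natCast_mul_eq_add_sum_increment_mul {ℓ : V → ℕ} (hℓ : Monotone ℓ) (νstar : V)
    (η : V → ℝ) :
    ∑ ν, (ℓ ν : ℝ) * η ν = ℓ νstar * ∑ ν, η ν
      + ∑ w : {ϖ : V // ϖ ≠ ⊥}, (increment ℓ w : ℝ) * decayRate νstar η w := by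
  have hℓ' : ∀ ν, (ℓ ν : ℝ) = ℓ ⊥ + ∑ ϖ ∈ univ.filter (· ≤ ν), (increment ℓ ϖ : ℝ) := fun ν => by
    exact_mod_cast (add_sum_increment hℓ ν).symm
  have hroot : ∑ w : {ϖ : V // ϖ ≠ ⊥}, (increment ℓ w : ℝ) * decayRate νstar η w
      = ∑ ϖ, (increment ℓ ϖ : ℝ) * decayRate νstar η ϖ := by
    simp [Fintype.sum_eq_add_sum_subtype_ne _ (⊥ : V)]
  have hfubini : ∑ ν, (ℓ ν : ℝ) * η ν = ℓ ⊥ * ∑ ν, η ν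
      + ∑ ϖ, (increment ℓ ϖ : ℝ) * ∑ υ ∈ univ.filter (ϖ ≤ ·), η υ := by
    rw [← sum_sum_filter_le_mul, mul_sum, ← sum_add_distrib]
    exact sum_congr rfl fun ν _ => by rw [hℓ' ν, add_mul]
  rw [hfubini, hroot, hℓ' νstar]
  simp only [decayRate, mul_sub, mul_ite, mul_zero, sum_sub_distrib, sum_ite, sum_const_zero,
    ← sum_mul]
  ring

theorem prod_two_rpow_neg_mul_eq {ℓ : V → ℕ} (hℓ : Monotone ℓ) (νstar : V) (η : V → ℝ) :
    ∏ ν, (2 : ℝ) ^ (-(ℓ ν : ℝ) * η ν) = ((2 : ℝ) ^ (-∑ ν, η ν)) ^ ℓ νstar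
      * ∏ w : {ϖ : V // ϖ ≠ ⊥}, ((2 : ℝ) ^ (-decayRate νstar η w)) ^ increment ℓ w := by
  simp_rw [← Real.two_rpow_neg_natCast_mul, ← Real.rpow_sum_of_pos two_pos,
    ← Real.rpow_add two_pos]
  congr 1
  simp only [neg_mul, sum_neg_distrib, sum_natCast_mul_eq_add_sum_increment_mul hℓ νstar η]
  ring

theorem tsum_ofReal_prod_two_rpow_neg_mul_le (νstar : V) (η : V → ℝ) (hA : 0 ≤ ∑ ν, η ν)
    {lam : ℝ} (hlam : 0 < lam) :
    ∑' ℓ : {ℓ : V → ℕ // Monotone ℓ ∧ (2 : ℝ) ^ (-(ℓ νstar : ℝ)) ≤ lam},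
        ENNReal.ofReal (∏ ν, (2 : ℝ) ^ (-(ℓ.1 ν : ℝ) * η ν))
      ≤ ENNReal.ofReal (lam ^ ∑ ν, η ν) * ((1 - ENNReal.ofReal (2 ^ (-∑ ν, η ν)))⁻¹
          * ∏ w : {ϖ : V // ϖ ≠ ⊥}, (1 - ENNReal.ofReal (2 ^ (-decayRate νstar η w)))⁻¹) := by
  set q := ENNReal.ofReal (2 ^ (-∑ ν, η ν))
  set r : {ϖ : V // ϖ ≠ ⊥} → ℝ≥0∞ := fun w => ENNReal.ofReal (2 ^ (-decayRate νstar η w))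
  set a : ℕ → ℝ≥0∞ := fun n => if (2 : ℝ) ^ (-(n : ℝ)) ≤ lam then q ^ n else 0
  set g : ℕ × ({ϖ : V // ϖ ≠ ⊥} → ℕ) → ℝ≥0∞ := fun p => a p.1 * ∏ w, r w ^ p.2 w
  calc ∑' ℓ : {ℓ : V → ℕ // Monotone ℓ ∧ (2 : ℝ) ^ (-(ℓ νstar : ℝ)) ≤ lam},
        ENNReal.ofReal (∏ ν, (2 : ℝ) ^ (-(ℓ.1 ν : ℝ) * η ν))
      = ∑' ℓ : {ℓ : V → ℕ // Monotone ℓ ∧ (2 : ℝ) ^ (-(ℓ νstar : ℝ)) ≤ lam},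
          g (ℓ.1 νstar, fun w => increment ℓ.1 w) := by
        refine tsum_congr fun ℓ => ?_
        rw [prod_two_rpow_neg_mul_eq ℓ.2.1 νstar η, ENNReal.ofReal_mul (by positivity),
          ENNReal.ofReal_pow (by positivity),
          ENNReal.ofReal_prod_of_nonneg fun _ _ => by positivity]
        simp only [g, a, if_pos ℓ.2.2, ENNReal.ofReal_pow (Real.rpow_nonneg zero_le_two _), q, r]
    _ ≤ ∑' p, g p := ENNReal.tsum_comp_le_tsum_of_injective
        (fun ℓ ℓ' h => Subtype.ext (injOn_apply_increment νstar ℓ.2.1 ℓ'.2.1 h)) g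
    _ = (∑' n, a n) * ∏ w, (1 - r w)⁻¹ := ENNReal.tsum_mul_prod_pow a r
    _ ≤ _ := by
        rw [← mul_assoc]
        gcongr
        exact tsum_geometric_two_rpow_le hlam hA

end Increment

/-- Summing over monotone labelings of a rooted tree (Lemma `theo:sumTree`):
the rooted tree is encoded as a finite partial order with bottom element (the root),
in which `ν ≥ ϖ` means that `ϖ` is an ancestor of `ν`, and such that the set of
ancestors of any node is totally ordered. Under the two sign conditions on `η`,
the sum `𝓘_λ(η) = ∑_{ℓ} ∏_ν 2^{-ℓ_ν η_ν}` over monotone labelings `ℓ : T° → ℕ`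
with `2^{-ℓ_{ν⋆}} ≤ λ` converges and is bounded by `C λ^{|η|}`. -/
theorem stmt2 (V : Type) [Fintype V] [PartialOrder V] [OrderBot V]
    (htree : ∀ ν a b : V, a ≤ ν → b ≤ ν → a ≤ b ∨ b ≤ a)
    (νstar : V) (η : V → ℝ)
    (h1 : ∀ ν : V, 0 < ∑ υ ∈ Finset.univ.filter (fun υ => ν ≤ υ), η υ)
    (h2 : ∀ ν : V, ν ≤ νstar →
      (Finset.univ.filter (fun υ => ¬ ν ≤ υ)).Nonempty →
      ∑ υ ∈ Finset.univ.filter (fun υ => ¬ ν ≤ υ), η υ < 0) :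
    ∃ C : ℝ, ∀ lam : ℝ, 0 < lam → lam ≤ 1 →
      Summable (fun ℓ : {ℓ : V → ℕ // Monotone ℓ ∧ (2:ℝ) ^ (-(ℓ νstar : ℝ)) ≤ lam} =>
        ∏ ν : V, (2:ℝ) ^ (-(ℓ.1 ν : ℝ) * η ν)) ∧
      (∑' ℓ : {ℓ : V → ℕ // Monotone ℓ ∧ (2:ℝ) ^ (-(ℓ νstar : ℝ)) ≤ lam},
        ∏ ν : V, (2:ℝ) ^ (-(ℓ.1 ν : ℝ) * η ν)) ≤ C * lam ^ (∑ ν : V, η ν) := by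
  let _ : PredOrder V := PredOrder.ofIsChainIio fun ν a ha b hb _ => htree ν a b ha.le hb.le
  have hA : 0 < ∑ ν, η ν := by simpa using h1 ⊥
  set K := (1 - ENNReal.ofReal (2 ^ (-∑ ν, η ν)))⁻¹
    * ∏ w : {ϖ : V // ϖ ≠ ⊥}, (1 - ENNReal.ofReal (2 ^ (-decayRate νstar η w)))⁻¹
  have hK : K ≠ ⊤ := ENNReal.mul_ne_top (inv_one_sub_ofReal_two_rpow_neg_ne_top hA)
    (ENNReal.prod_ne_top fun w _ =>
      inv_one_sub_ofReal_two_rpow_neg_ne_top (decayRate_pos h1 h2 w.2))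
  refine ⟨K.toReal, fun lam hlam _ => ?_⟩
  refine summable_and_tsum_le_of_tsum_ofReal_le (fun ℓ => by positivity) (by positivity) ?_
  calc _ ≤ ENNReal.ofReal (lam ^ ∑ ν, η ν) * K :=
        tsum_ofReal_prod_two_rpow_neg_mul_le νstar η hA.le hlam
    _ = ENNReal.ofReal (K.toReal * lam ^ ∑ ν, η ν) := by
        rw [mul_comm, ENNReal.ofReal_mul ENNReal.toReal_nonneg, ENNReal.ofReal_toReal hK]
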